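/- Fix β > log 4 and define w_c(β) = arccosh(e^β/2 − 4e^{−β}) (which is well defined and nonnegative since e^β/2 − 4e^{−β} ≥ 1 for β ≥ log 4). Then c_β'''(w) > 0 for all 0 < w < w_c(β) and c_β'''(w) < 0 for all w > w_c(β); consequently c_β' is strictly convex on (0, w_c(β)) and strictly concave on (w_c(β), ∞). -/

import Mathlib

noncomputable section

/-- `c_β(t) = log[(1 + e^{−β}(e^t + e^{−t}))/(1 + 2e^{−β})]`. -/
def cBeta (β t : ℝ) : ℝ :=
  Real.log ((1 + Real.exp (-β) * (Real.exp t + Real.exp (-t))) / (1 + 2 * Real.exp (-β)))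

/-- The inverse hyperbolic cosine, `arcosh x = log (x + √(x² − 1))`
(the inverse of `cosh` on `[0, ∞)` for `x ≥ 1`). -/
def arcosh (x : ℝ) : ℝ := Real.log (x + Real.sqrt (x ^ 2 - 1))

/-- `w_c(β) = arccosh(e^β/2 − 4e^{−β})`. -/
def wCrit (β : ℝ) : ℝ := arcosh (Real.exp β / 2 - 4 * Real.exp (-β))

/-!
Write `a = e^{-β}`, so that `c_β t = log (1 + 2a cosh t) - log (1 + 2a)`. Differentiating three
times (using `cosh² - sinh² = 1` once) gives
`c_β''' t = 2a sinh t (1 - 8a² - 2a cosh t) / (1 + 2a cosh t)³`,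
and `cosh w_c = e^β/2 - 4e^{-β}` says exactly that `1 - 8a² = 2a cosh w_c`. Hence for `t > 0` the
sign of `c_β''' t` is that of `cosh w_c - cosh t`, which changes at `w_c` because `cosh` is strictly
increasing on `[0, ∞)`. The convexity statements are the sign of `(c_β')'' = c_β'''`.
-/

open Real

section Derivatives

variable {a : ℝ}

lemma one_add_two_mul_cosh_pos (ha : 0 ≤ a) (t : ℝ) : 0 < 1 + 2 * a * cosh t := by
  have := cosh_pos t
  positivity

lemma hasDerivAt_log_one_add_two_mul_cosh (ha : 0 ≤ a) (t : ℝ) :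
    HasDerivAt (fun t => log (1 + 2 * a * cosh t))
      (2 * a * sinh t / (1 + 2 * a * cosh t)) t :=
  ((((hasDerivAt_cosh t).const_mul (2 * a)).const_add 1).log
    (one_add_two_mul_cosh_pos ha t).ne').congr_deriv (by ring)

lemma hasDerivAt_sinh_div_one_add_two_mul_cosh (ha : 0 ≤ a) (t : ℝ) :
    HasDerivAt (fun t => 2 * a * sinh t / (1 + 2 * a * cosh t))
      ((2 * a * cosh t + 4 * a ^ 2) / (1 + 2 * a * cosh t) ^ 2) t := by
  have h := ((hasDerivAt_sinh t).const_mul (2 * a)).div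
    (((hasDerivAt_cosh t).const_mul (2 * a)).const_add 1) (one_add_two_mul_cosh_pos ha t).ne'
  refine h.congr_deriv ?_
  congr 1
  linear_combination 4 * a ^ 2 * cosh_sq_sub_sinh_sq t

lemma hasDerivAt_cosh_div_one_add_two_mul_cosh_sq (ha : 0 ≤ a) (t : ℝ) :
    HasDerivAt (fun t => (2 * a * cosh t + 4 * a ^ 2) / (1 + 2 * a * cosh t) ^ 2)
      (2 * a * sinh t * (1 - 8 * a ^ 2 - 2 * a * cosh t) / (1 + 2 * a * cosh t) ^ 3) t := by
  have hN := one_add_two_mul_cosh_pos ha t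
  have hden : HasDerivAt (fun t => (1 + 2 * a * cosh t) ^ 2)
      (2 * (1 + 2 * a * cosh t) * (2 * a * sinh t)) t :=
    ((((hasDerivAt_cosh t).const_mul (2 * a)).const_add 1).fun_pow 2).congr_deriv (by norm_num)
  have h := (((hasDerivAt_cosh t).const_mul (2 * a)).add_const (4 * a ^ 2)).div hden
    (by positivity)
  refine h.congr_deriv ?_
  field_simp
  ring

end Derivatives

lemma strictConvexOn_deriv_of_iteratedDeriv_three_pos {D : Set ℝ} (hD : Convex ℝ D)
    {f : ℝ → ℝ} (hf : ContinuousOn (deriv f) D)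
    (h : ∀ x ∈ interior D, 0 < iteratedDeriv 3 f x) : StrictConvexOn ℝ D (deriv f) :=
  strictConvexOn_of_deriv2_pos hD hf fun x hx => by
    simpa [iteratedDeriv_succ'] using h x hx

lemma strictConcaveOn_deriv_of_iteratedDeriv_three_neg {D : Set ℝ} (hD : Convex ℝ D)
    {f : ℝ → ℝ} (hf : ContinuousOn (deriv f) D)
    (h : ∀ x ∈ interior D, iteratedDeriv 3 f x < 0) : StrictConcaveOn ℝ D (deriv f) :=
  strictConcaveOn_of_deriv2_neg hD hf fun x hx => by
    simpa [iteratedDeriv_succ'] using h x hx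

lemma cBeta_eq (β t : ℝ) :
    cBeta β t = log (1 + 2 * exp (-β) * cosh t) - log (1 + 2 * exp (-β)) := by
  rw [cBeta, log_div (by positivity) (by positivity), cosh_eq]
  ring_nf

lemma hasDerivAt_cBeta (β t : ℝ) :
    HasDerivAt (cBeta β) (2 * exp (-β) * sinh t / (1 + 2 * exp (-β) * cosh t)) t := by
  rw [funext (cBeta_eq β)]
  exact (hasDerivAt_log_one_add_two_mul_cosh (exp_pos _).le t).sub_const _

lemma deriv_cBeta (β : ℝ) :
    deriv (cBeta β) = fun t => 2 * exp (-β) * sinh t / (1 + 2 * exp (-β) * cosh t) :=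
  funext fun t => (hasDerivAt_cBeta β t).deriv

lemma continuous_deriv_cBeta (β : ℝ) : Continuous (deriv (cBeta β)) :=
  continuous_iff_continuousAt.mpr fun t => by
    rw [deriv_cBeta]
    exact (hasDerivAt_sinh_div_one_add_two_mul_cosh (exp_pos _).le t).continuousAt

lemma iteratedDeriv_three_cBeta (β : ℝ) :
    iteratedDeriv 3 (cBeta β) = fun t => 2 * exp (-β) * sinh t *
      (1 - 8 * exp (-β) ^ 2 - 2 * exp (-β) * cosh t) / (1 + 2 * exp (-β) * cosh t) ^ 3 := by
  have ha := (exp_pos (-β)).le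
  rw [iteratedDeriv_succ, iteratedDeriv_succ, iteratedDeriv_one, deriv_cBeta,
    funext fun t => (hasDerivAt_sinh_div_one_add_two_mul_cosh ha t).deriv,
    funext fun t => (hasDerivAt_cosh_div_one_add_two_mul_cosh_sq ha t).deriv]

lemma one_le_exp_div_two_sub_four_mul_exp_neg {β : ℝ} (hβ : log 4 ≤ β) :
    1 ≤ exp β / 2 - 4 * exp (-β) := by
  have h4 : 4 ≤ exp β := by simpa [exp_log] using exp_le_exp.mpr hβ
  have h : 4 * exp (-β) ≤ 1 := by
    rw [exp_neg, ← div_eq_mul_inv, div_le_one (exp_pos β)]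
    exact h4
  linarith

lemma wCrit_nonneg {β : ℝ} (hβ : log 4 ≤ β) : 0 ≤ wCrit β :=
  Real.arcosh_nonneg (one_le_exp_div_two_sub_four_mul_exp_neg hβ)

lemma two_mul_exp_neg_mul_cosh_wCrit {β : ℝ} (hβ : log 4 ≤ β) :
    2 * exp (-β) * cosh (wCrit β) = 1 - 8 * exp (-β) ^ 2 := by
  rw [wCrit, show _root_.arcosh = Real.arcosh from rfl,
    Real.cosh_arcosh (one_le_exp_div_two_sub_four_mul_exp_neg hβ), exp_neg]
  field_simp
  ring

lemma iteratedDeriv_three_cBeta_eq {β : ℝ} (hβ : log 4 ≤ β) (w : ℝ) :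
    iteratedDeriv 3 (cBeta β) w = 4 * exp (-β) ^ 2 * sinh w * (cosh (wCrit β) - cosh w) /
      (1 + 2 * exp (-β) * cosh w) ^ 3 := by
  rw [iteratedDeriv_three_cBeta, ← two_mul_exp_neg_mul_cosh_wCrit hβ]
  ring

lemma iteratedDeriv_three_cBeta_pos {β w : ℝ} (hβ : log 4 ≤ β) (hw : 0 < w)
    (hwc : w < wCrit β) : 0 < iteratedDeriv 3 (cBeta β) w := by
  have hcosh : cosh w < cosh (wCrit β) := cosh_strictMonoOn hw.le (wCrit_nonneg hβ) hwc
  have hsinh := sinh_pos_iff.mpr hw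
  have hN := one_add_two_mul_cosh_pos (exp_pos (-β)).le w
  rw [iteratedDeriv_three_cBeta_eq hβ]
  exact div_pos (mul_pos (by positivity) (sub_pos.mpr hcosh)) (by positivity)

lemma iteratedDeriv_three_cBeta_neg {β w : ℝ} (hβ : log 4 ≤ β) (hwc : wCrit β < w) :
    iteratedDeriv 3 (cBeta β) w < 0 := by
  have hw := (wCrit_nonneg hβ).trans_lt hwc
  have hcosh : cosh (wCrit β) < cosh w := cosh_strictMonoOn (wCrit_nonneg hβ) hw.le hwc
  have hsinh := sinh_pos_iff.mpr hw
  have hN := one_add_two_mul_cosh_pos (exp_pos (-β)).le w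
  rw [iteratedDeriv_three_cBeta_eq hβ]
  exact div_neg_of_neg_of_pos (mul_neg_of_pos_of_neg (by positivity) (sub_neg.mpr hcosh))
    (by positivity)

/-- For `β > log 4`, with `w_c(β) = arccosh(e^β/2 − 4e^{−β})` (well
defined and nonnegative since `e^β/2 − 4e^{−β} ≥ 1`): `c_β'''(w) > 0` for
`0 < w < w_c(β)` and `c_β'''(w) < 0` for `w > w_c(β)`; consequently `c_β'` is strictly
convex on `(0, w_c(β))` and strictly concave on `(w_c(β), ∞)`. -/
theorem cBeta_third_deriv_sign (β : ℝ) (hβ : Real.log 4 < β) :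
    (1 ≤ Real.exp β / 2 - 4 * Real.exp (-β)) ∧ 0 ≤ wCrit β ∧
    (∀ w : ℝ, 0 < w → w < wCrit β → 0 < iteratedDeriv 3 (cBeta β) w) ∧
    (∀ w : ℝ, wCrit β < w → iteratedDeriv 3 (cBeta β) w < 0) ∧
    StrictConvexOn ℝ (Set.Ioo 0 (wCrit β)) (deriv (cBeta β)) ∧
    StrictConcaveOn ℝ (Set.Ioi (wCrit β)) (deriv (cBeta β)) := by
  have hpos (w : ℝ) (hw : 0 < w) (hwc : w < wCrit β) :=
    iteratedDeriv_three_cBeta_pos hβ.le hw hwc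
  have hneg (w : ℝ) (hwc : wCrit β < w) := iteratedDeriv_three_cBeta_neg hβ.le hwc
  refine ⟨one_le_exp_div_two_sub_four_mul_exp_neg hβ.le, wCrit_nonneg hβ.le, hpos, hneg, ?_, ?_⟩
  · refine strictConvexOn_deriv_of_iteratedDeriv_three_pos (convex_Ioo _ _)
      (continuous_deriv_cBeta β).continuousOn fun w hw => ?_
    rw [interior_Ioo] at hw
    exact hpos w hw.1 hw.2
  · refine strictConcaveOn_deriv_of_iteratedDeriv_three_neg (convex_Ioi _)
      (continuous_deriv_cBeta β).continuousOn fun w hw => ?_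
    rw [interior_Ioi] at hw
    exact hneg w hw
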